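/- arXiv:1805.09587 — 2 statements merged into one kernel-verified Lean document; each statement's English description precedes it below -/
import Mathlib

section
/- Let I be a nonempty finite linearly preordered set and let Conv(I) denote the set of convex equivalence relations on I (equivalence relations E such that i ≤_I j ≤_I k and i E k imply i E j and j E k), partially ordered by refinement. For E ∈ Conv(I), define subsets of Rep(I, Bℝ⁺): U_E = {α : i E j ⟹ α(i,j) < ∞ (for i ≤_I j)} and K_E = {α : (i E j ⟺ α(i,j) < ∞) for i ≤_I j}. Then: (i) the assignment E ↦ U_E is order-reversing; (ii) K_E = U_E ∖ ⋃_{E ⊊ E'} U_{E'}; (iii) every point α of Rep(I, Bℝ⁺) belongs to exactly one K_E. -/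
/-- A linear preorder: a reflexive, transitive, total relation. -/
def IsLinearPreorder {I : Type} (r : I → I → Prop) : Prop :=
  (∀ x, r x x) ∧ (∀ x y z, r x y → r y z → r x z) ∧ (∀ x y, r x y ∨ r y x)

/-- A convex equivalence relation with respect to the linear preorder `r`. -/
def IsConvexEquiv {I : Type} (r : I → I → Prop) (E : I → I → Prop) : Prop :=
  Equivalence E ∧ ∀ i j k, r i j → r j k → E i k → E i j ∧ E j k

/-- `Rep(I, Bℝ⁺)`, encoded as functions `I → I → EReal` constrained on
comparable pairs: never `⊥`, zero on the diagonal, cocycle condition. -/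
def RepSet {I : Type} (r : I → I → Prop) : Set (I → I → EReal) :=
  {α | (∀ i j, r i j → α i j ≠ ⊥) ∧ (∀ i, α i i = 0) ∧
    ∀ i j k, r i j → r j k → α i j + α j k = α i k}

/-- The open stratum `U_E = {α ∈ Rep | i E j → α i j < ∞}`. -/
def USet {I : Type} (r : I → I → Prop) (E : I → I → Prop) : Set (I → I → EReal) :=
  {α | α ∈ RepSet r ∧ ∀ i j, r i j → E i j → α i j ≠ ⊤}

/-- The locally closed stratum `K_E = {α ∈ Rep | i E j ↔ α i j < ∞}`. -/
def KSet {I : Type} (r : I → I → Prop) (E : I → I → Prop) : Set (I → I → EReal) :=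
  {α | α ∈ RepSet r ∧ ∀ i j, r i j → (E i j ↔ α i j ≠ ⊤)}

namespace RepAux

variable {I : Type} {r : I → I → Prop} {α : I → I → EReal}

/-- left factor finite when total is finite -/
lemma left_ne_top (hα : α ∈ RepSet r) {i j k : I} (hij : r i j) (hjk : r j k)
    (h : α i k ≠ ⊤) : α i j ≠ ⊤ := by
  intro htop
  apply h
  rw [← hα.2.2 i j k hij hjk, htop, EReal.top_add_of_ne_bot (hα.1 j k hjk)]

lemma right_ne_top (hα : α ∈ RepSet r) {i j k : I} (hij : r i j) (hjk : r j k)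
    (h : α i k ≠ ⊤) : α j k ≠ ⊤ := by
  intro htop
  apply h
  rw [← hα.2.2 i j k hij hjk, htop, EReal.add_top_of_ne_bot (hα.1 i j hij)]

lemma sum_ne_top (hα : α ∈ RepSet r) {i j k : I} (hij : r i j) (hjk : r j k)
    (h1 : α i j ≠ ⊤) (h2 : α j k ≠ ⊤) : α i k ≠ ⊤ := by
  rw [← hα.2.2 i j k hij hjk]
  exact (EReal.add_lt_top h1 h2).ne

/-- the canonical relation attached to α -/
def Erel (r : I → I → Prop) (α : I → I → EReal) (i j : I) : Prop :=
  (r i j → α i j ≠ ⊤) ∧ (r j i → α j i ≠ ⊤)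

lemma erel_symm {i j : I} (h : Erel r α i j) : Erel r α j i := ⟨h.2, h.1⟩

/-- if r j i too, finiteness transfers -/
lemma rev_ne_top (hα : α ∈ RepSet r) {i j : I} (hij : r i j) (hji : r j i)
    (h : α i j ≠ ⊤) : α j i ≠ ⊤ := by
  intro htop
  have := hα.2.2 j i j hji hij
  rw [htop, EReal.top_add_of_ne_bot (hα.1 i j hij), hα.2.1 j] at this
  exact absurd this.symm (by simp)

lemma erel_of_ne_top (hα : α ∈ RepSet r) {i j : I} (hij : r i j)
    (h : α i j ≠ ⊤) : Erel r α i j :=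
  ⟨fun _ => h, fun hji => rev_ne_top hα hij hji h⟩

lemma erel_trans_aux (hr : IsLinearPreorder r) (hα : α ∈ RepSet r) {i j k : I}
    (h1 : Erel r α i j) (h2 : Erel r α j k) (hik : r i k) : α i k ≠ ⊤ := by
  rcases hr.2.2 i j with hij | hji
  · rcases hr.2.2 j k with hjk | hkj
    · exact sum_ne_top hα hij hjk (h1.1 hij) (h2.1 hjk)
    · exact left_ne_top hα hik hkj (h1.1 hij)
  · have hjk : r j k := hr.2.1 j i k hji hik
    exact right_ne_top hα hji hik (h2.1 hjk)

lemma erel_equiv (hr : IsLinearPreorder r) (hα : α ∈ RepSet r) :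
    Equivalence (Erel r α) := by
  constructor
  · intro x
    constructor <;> intro _ <;> rw [hα.2.1 x] <;> simp
  · exact fun h => erel_symm h
  · intro x y z h1 h2
    exact ⟨fun hxz => erel_trans_aux hr hα h1 h2 hxz,
      fun hzx => erel_trans_aux hr hα (erel_symm h2) (erel_symm h1) hzx⟩

lemma erel_convex (hr : IsLinearPreorder r) (hα : α ∈ RepSet r) :
    IsConvexEquiv r (Erel r α) := by
  refine ⟨erel_equiv hr hα, fun i j k hij hjk hik => ?_⟩
  have hik' : r i k := hr.2.1 i j k hij hjk
  have htop := hik.1 hik'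
  exact ⟨erel_of_ne_top hα hij (left_ne_top hα hij hjk htop),
    erel_of_ne_top hα hjk (right_ne_top hα hij hjk htop)⟩

lemma mem_K_erel (hα : α ∈ RepSet r) : α ∈ KSet r (Erel r α) :=
  ⟨hα, fun i j hij => ⟨fun h => h.1 hij, fun h => erel_of_ne_top hα hij h⟩⟩

lemma eq_erel_of_mem_K (hr : IsLinearPreorder r) {E : I → I → Prop}
    (hE : IsConvexEquiv r E) (hK : α ∈ KSet r E) : E = Erel r α := by
  funext i j
  apply propext
  constructor
  · intro hEij
    exact ⟨fun hij => (hK.2 i j hij).1 hEij,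
      fun hji => (hK.2 j i hji).1 (hE.1.symm hEij)⟩
  · intro h
    rcases hr.2.2 i j with hij | hji
    · exact (hK.2 i j hij).2 (h.1 hij)
    · exact hE.1.symm ((hK.2 j i hji).2 (h.2 hji))

end RepAux



/-- For a nonempty finite linearly preordered set `(I, r)`:
(i) `E ↦ U_E` is order-reversing for the refinement order on convex
equivalence relations; (ii) `K_E = U_E ∖ ⋃_{E ⊊ E'} U_{E'}`; (iii) every
`α ∈ Rep(I, Bℝ⁺)` lies in exactly one stratum `K_E` with `E` a convex
equivalence relation. -/
theorem rep_stratification {I : Type} [Fintype I] [Nonempty I]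
    (r : I → I → Prop) (hr : IsLinearPreorder r) :
    (∀ E E' : I → I → Prop, IsConvexEquiv r E → IsConvexEquiv r E' →
      (∀ i j, E i j → E' i j) → USet r E' ⊆ USet r E) ∧
    (∀ E : I → I → Prop, IsConvexEquiv r E →
      KSet r E = USet r E \
        ⋃ (E' : I → I → Prop)
          (_ : IsConvexEquiv r E' ∧ (∀ i j, E i j → E' i j) ∧ E' ≠ E),
          USet r E') ∧
    (∀ α ∈ RepSet r, ∃! E : I → I → Prop, IsConvexEquiv r E ∧ α ∈ KSet r E) := by
  refine ⟨?_, ?_, ?_⟩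
  · intro E E' _ _ hle α hα
    exact ⟨hα.1, fun i j hij hEij => hα.2 i j hij (hle i j hEij)⟩
  · intro E hE
    ext α
    constructor
    · intro hK
      refine ⟨⟨hK.1, fun i j hij hEij => (hK.2 i j hij).1 hEij⟩, ?_⟩
      intro hmem
      simp only [Set.mem_iUnion] at hmem
      obtain ⟨E', ⟨hE', hle, hne⟩, hU⟩ := hmem
      apply hne
      funext i j
      apply propext
      constructor
      · intro hE'ij
        rcases hr.2.2 i j with hij | hji
        · exact (hK.2 i j hij).2 (hU.2 i j hij hE'ij)
        · exact hE.1.symm ((hK.2 j i hji).2 (hU.2 j i hji (hE'.1.symm hE'ij)))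
      · exact hle i j
    · rintro ⟨hU, hnot⟩
      have hα : α ∈ RepSet r := hU.1
      have hle : ∀ i j, E i j → RepAux.Erel r α i j := by
        intro i j hEij
        exact ⟨fun hij => hU.2 i j hij hEij, fun hji => hU.2 j i hji (hE.1.symm hEij)⟩
      have heq : RepAux.Erel r α = E := by
        by_contra hne
        apply hnot
        simp only [Set.mem_iUnion]
        refine ⟨RepAux.Erel r α, ⟨RepAux.erel_convex hr hα, hle, hne⟩, ?_⟩
        exact ⟨hα, fun i j hij h => h.1 hij⟩
      have := RepAux.mem_K_erel (r := r) hα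
      rwa [heq] at this
  · intro α hα
    refine ⟨RepAux.Erel r α, ⟨RepAux.erel_convex hr hα, RepAux.mem_K_erel hα⟩, ?_⟩
    intro E ⟨hE, hK⟩
    exact RepAux.eq_erel_of_mem_K hr hE hK
end

section
/- Let I be a nonempty finite linearly preordered set and E a convex equivalence relation on I. With Rep(I, Bℝ⁺) topologized as a subspace of a finite product of copies of ℝ⁺ = (-∞,∞], the stratum K_E = {α : for i ≤_I j, (i E j ⟺ α(i,j) < ∞)} is homeomorphic to Euclidean space ℝ^{|I| - |I/E|}; in particular K_E is contractible. -/
/-- The comparable pairs of the preorder `r`. -/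
def PairsOf {I : Type} (r : I → I → Prop) : Type := {p : I × I // r p.1 p.2}

/-- `Rep(I, Bℝ⁺)`, topologized as a subspace of the finite product
`∏_{i ≤_I j} ℝ⁺` where `ℝ⁺ = (-∞,∞]` sits inside `EReal`: functions on the
comparable pairs, never `⊥ = -∞`, vanishing on the diagonal, and satisfying
the cocycle condition. -/
def RepSetP {I : Type} (r : I → I → Prop) : Set (PairsOf r → EReal) :=
  {α | (∀ p, α p ≠ ⊥) ∧ (∀ i (h : r i i), α ⟨(i, i), h⟩ = 0) ∧
    ∀ i j k (hij : r i j) (hjk : r j k) (hik : r i k),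
      α ⟨(i, j), hij⟩ + α ⟨(j, k), hjk⟩ = α ⟨(i, k), hik⟩}

/-- The stratum `K_E ⊆ Rep(I, Bℝ⁺)` attached to a convex equivalence relation
`E`: those `α` with `α i j < ∞` iff `i E j`, for comparable `i ≤_I j`. -/
def KSetP {I : Type} (r : I → I → Prop) (E : I → I → Prop) : Set (PairsOf r → EReal) :=
  {α | α ∈ RepSetP r ∧ ∀ i j (h : r i j), E i j ↔ α ⟨(i, j), h⟩ ≠ ⊤}

/-- For a nonempty finite linearly preordered set `(I, r)` and a convex
equivalence relation `E` on `I`, the stratum `K_E` of `Rep(I, Bℝ⁺)` is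
homeomorphic to the Euclidean space `ℝ^(|I| - |I/E|)`; in particular it is
contractible. -/
theorem kSet_homeomorph_euclidean {I : Type} [Fintype I] [Nonempty I]
    (r : I → I → Prop) (hr : IsLinearPreorder r)
    (E : I → I → Prop) (hE : Equivalence E)
    (hconv : ∀ i j k, r i j → r j k → E i k → E i j ∧ E j k) :
    Nonempty (↥(KSetP r E) ≃ₜ
      (Fin (Fintype.card I - Nat.card (Quotient (⟨E, hE⟩ : Setoid I))) → ℝ)) ∧
    ContractibleSpace ↥(KSetP r E) := by
  classical
  obtain ⟨hrefl, htrans, htot⟩ := hr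
  set S : Setoid I := ⟨E, hE⟩ with hS
  set c : I → I := fun i => (Quotient.mk S i).out with hc
  have hcE : ∀ i, E (c i) i := fun i => Quotient.exact ((Quotient.mk S i).out_eq)
  have hcc : ∀ i, c (c i) = c i := by
    intro i; simp only [hc]; rw [Quotient.out_eq]
  have hceq : ∀ i j, E i j → c i = c j := by
    intro i j h; simp only [hc]; congr 1; exact Quotient.sound h
  -- the value function relative to a base point
  set g : (PairsOf r → EReal) → I → I → EReal := fun α b i =>
    if h : r b i then α ⟨(b, i), h⟩ else -α ⟨(i, b), (htot b i).resolve_left h⟩ with hg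
  -- real-valuedness on E-pairs
  have hre : ∀ α ∈ KSetP r E, ∀ i j (h : r i j), E i j →
      ∃ x : ℝ, α ⟨(i, j), h⟩ = (x : EReal) := by
    intro α hα i j h he
    exact ⟨_, (EReal.coe_toReal ((hα.2 i j h).mp he) (hα.1.1 _)).symm⟩
  have hgre : ∀ α ∈ KSetP r E, ∀ b i, E b i → ∃ x : ℝ, g α b i = (x : EReal) := by
    intro α hα b i he
    simp only [hg]
    by_cases h : r b i
    · rw [dif_pos h]; exact hre α hα b i h he
    · rw [dif_neg h]
      obtain ⟨x, hx⟩ := hre α hα i b _ (hE.symm he)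
      exact ⟨-x, by rw [hx]; norm_cast⟩
  -- the key cocycle identity for g
  have hkey : ∀ α ∈ KSetP r E, ∀ b i j (hij : r i j), E b i → E i j →
      g α b i + α ⟨(i, j), hij⟩ = g α b j := by
    intro α hα b i j hij hbi hbij
    have hbj : E b j := hE.trans hbi hbij
    obtain ⟨y, hy⟩ := hre α hα i j hij hbij
    simp only [hg]
    by_cases h1 : r b i
    · have h2 : r b j := htrans _ _ _ h1 hij
      rw [dif_pos h1, dif_pos h2]
      exact hα.1.2.2 b i j h1 hij h2
    · have hib : r i b := (htot b i).resolve_left h1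
      obtain ⟨x, hx⟩ := hre α hα i b hib (hE.symm hbi)
      rw [dif_neg h1]
      by_cases h2 : r b j
      · obtain ⟨z, hz⟩ := hre α hα b j h2 hbj
        rw [dif_pos h2]
        have hco := hα.1.2.2 i b j hib h2 hij
        rw [hx, hy, hz] at *
        have : x + z = y := by exact_mod_cast hco
        norm_cast
        linarith
      · have hjb : r j b := (htot b j).resolve_left h2
        obtain ⟨w, hw⟩ := hre α hα j b hjb (hE.symm hbj)
        rw [dif_neg h2]
        have hco := hα.1.2.2 i j b hij hjb hib
        rw [hx, hy, hw] at *
        have : y + w = x := by exact_mod_cast hco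
        norm_cast
        linarith
  -- the index type
  set T : Type := {i : I // c i ≠ i} with hT
  -- forward map
  set F : ↥(KSetP r E) → (T → ℝ) := fun α t => (g α.1 (c t.1) t.1).toReal with hF
  -- inverse construction
  set H : (T → ℝ) → I → ℝ := fun x i => if h : c i ≠ i then x ⟨i, h⟩ else 0 with hH
  set G0 : (T → ℝ) → (PairsOf r → EReal) := fun x p =>
    if E p.1.1 p.1.2 then ((H x p.1.2 - H x p.1.1 : ℝ) : EReal) else ⊤ with hG0
  have hGmem : ∀ x, G0 x ∈ KSetP r E := by
    intro x
    refine ⟨⟨?_, ?_, ?_⟩, ?_⟩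
    · intro p
      simp only [hG0]
      by_cases h : E p.1.1 p.1.2
      · rw [if_pos h]; exact EReal.coe_ne_bot _
      · rw [if_neg h]; simp
    · intro i h
      simp only [hG0, if_pos (hE.refl i)]
      norm_num
    · intro i j k hij hjk hik
      simp only [hG0]
      by_cases h1 : E i j
      · by_cases h2 : E j k
        · rw [if_pos h1, if_pos h2, if_pos (hE.trans h1 h2)]
          norm_cast
          ring
        · have h3 : ¬ E i k := fun h => h2 (hconv i j k hij hjk h).2
          rw [if_pos h1, if_neg h2, if_neg h3]
          exact EReal.coe_add_top _
      · have h3 : ¬ E i k := fun h => h1 (hconv i j k hij hjk h).1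
        rw [if_neg h1, if_neg h3]
        by_cases h2 : E j k
        · rw [if_pos h2]; exact EReal.top_add_coe _
        · rw [if_neg h2]; exact EReal.top_add_top
    · intro i j h
      simp only [hG0]
      by_cases he : E i j
      · rw [if_pos he]; exact iff_of_true he (EReal.coe_ne_top _)
      · rw [if_neg he]; exact iff_of_false he (by simp)
  set G : (T → ℝ) → ↥(KSetP r E) := fun x => ⟨G0 x, hGmem x⟩ with hGdef
  -- H of F
  have hHF : ∀ (α : ↥(KSetP r E)) (k : I), H (F α) k = (g α.1 (c k) k).toReal := by
    intro α k
    simp only [hH]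
    by_cases h : c k ≠ k
    · rw [dif_pos h]
    · rw [dif_neg h]
      push_neg at h
      have : g α.1 (c k) k = 0 := by
        rw [h]
        simp only [hg, dif_pos (hrefl k)]
        exact α.2.1.2.1 k (hrefl k)
      rw [this]; simp
  -- right inverse
  have hri : ∀ α : ↥(KSetP r E), G (F α) = α := by
    intro α
    apply Subtype.ext
    funext p
    obtain ⟨⟨i, j⟩, hij⟩ := p
    simp only [hGdef, hG0]
    by_cases he : E i j
    · rw [if_pos he]
      rw [hHF α i, hHF α j]
      obtain ⟨y, hy⟩ := hre α.1 α.2 i j hij he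
      obtain ⟨xi, hxi⟩ := hgre α.1 α.2 (c i) i (hcE i)
      obtain ⟨xj, hxj⟩ := hgre α.1 α.2 (c j) j (hcE j)
      have hkey' := hkey α.1 α.2 (c i) i j hij (hcE i) he
      have hcij : c i = c j := hceq i j he
      rw [hcij] at hkey' hxi
      rw [hxi, hy, hxj] at hkey'
      have hsum : xi + y = xj := by exact_mod_cast hkey'
      rw [hy, hcij, hxi, hxj]
      simp only [EReal.toReal_coe]
      norm_cast
      linarith
    · rw [if_neg he]
      by_contra hne
      exact he ((α.2.2 i j hij).mpr fun ht => hne ht.symm)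
  -- left inverse
  have hli : ∀ x : T → ℝ, F (G x) = x := by
    intro x
    funext t
    obtain ⟨t0, ht0⟩ := t
    have hHc : H x (c t0) = 0 := by
      simp only [hH]
      rw [dif_neg]
      simp [hcc t0]
    have hHt : H x t0 = x ⟨t0, ht0⟩ := by simp only [hH]; rw [dif_pos ht0]
    simp only [hF, hGdef, hg]
    by_cases h : r (c t0) t0
    · rw [dif_pos h]
      simp only [hG0, if_pos (hcE t0)]
      rw [hHc, hHt]
      simp
    · rw [dif_neg h]
      simp only [hG0, if_pos (hE.symm (hcE t0))]
      rw [hHc, hHt]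
      norm_cast
      simp
  -- continuity of F
  have hFcont : Continuous F := by
    apply continuous_pi
    intro t
    apply EReal.isEmbedding_coe.continuous_iff.mpr
    have hconc : Continuous fun α : ↥(KSetP r E) => g α.1 (c t.1) t.1 := by
      simp only [hg]
      by_cases h : r (c t.1) t.1
      · simp only [dif_pos h]
        exact (continuous_apply _).comp continuous_subtype_val
      · simp only [dif_neg h]
        exact ((continuous_apply _).comp continuous_subtype_val).neg
    apply hconc.congr
    intro α
    obtain ⟨x, hx⟩ := hgre α.1 α.2 (c t.1) t.1 (hcE t.1)
    show g α.1 (c t.1) t.1 = ((g α.1 (c t.1) t.1).toReal : EReal)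
    rw [hx]; simp
  -- continuity of G
  have hHcont : ∀ k : I, Continuous fun x : T → ℝ => H x k := by
    intro k
    simp only [hH]
    by_cases h : c k ≠ k
    · simp only [dif_pos h]; exact continuous_apply _
    · simp only [dif_neg h]; exact continuous_const
  have hGcont : Continuous G := by
    apply Continuous.subtype_mk
    apply continuous_pi
    intro p
    simp only [hG0]
    by_cases he : E p.1.1 p.1.2
    · simp only [if_pos he]
      exact (continuous_coe_real_ereal).comp ((hHcont p.1.2).sub (hHcont p.1.1))
    · simp only [if_neg he]
      exact continuous_const
  -- the first homeomorphism
  have e1 : ↥(KSetP r E) ≃ₜ (T → ℝ) :=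
    { toFun := F, invFun := G, left_inv := hri, right_inv := hli,
      continuous_toFun := hFcont, continuous_invFun := hGcont }
  -- cardinality
  have hfix : Nat.card (Quotient S) = Fintype.card {i : I // c i = i} := by
    have ψ : {i : I // c i = i} ≃ Quotient S :=
      { toFun := fun s => Quotient.mk S s.1
        invFun := fun q => ⟨q.out, by simp only [hc]; rw [Quotient.out_eq]⟩
        left_inv := by intro ⟨i, hi⟩; exact Subtype.ext hi
        right_inv := by intro q; exact Quotient.out_eq q }
    rw [Nat.card_congr ψ.symm, Nat.card_eq_fintype_card]
  have hcard : Fintype.card T = Fintype.card I - Nat.card (Quotient S) := by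
    rw [hfix]
    exact Fintype.card_subtype_compl _
  have e2 : (T → ℝ) ≃ₜ (Fin (Fintype.card I - Nat.card (Quotient S)) → ℝ) :=
    Homeomorph.piCongrLeft (Y := fun _ => ℝ) (Fintype.equivFinOfCardEq hcard)
  have e : ↥(KSetP r E) ≃ₜ (Fin (Fintype.card I - Nat.card (Quotient S)) → ℝ) :=
    e1.trans e2
  exact ⟨⟨e⟩, e.contractibleSpace⟩
end
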